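/- For every 2π-periodic C² function v : ℝ → ℝ, one has the spectral gap estimate −⟨Ã₂v, v⟩_{−1,w} ≥ (exp(−4Kr₀)/2)·‖v − (∫₀^{2π} v)·w‖²_{−1,w}. -/

import Mathlib

noncomputable section

open MeasureTheory

/-- `Ψ₀(x)`: the non-disordered fixed-point function. -/
def Psi0 (x : ℝ) : ℝ :=
  (∫ θ in (0:ℝ)..(2 * Real.pi), Real.cos θ * Real.exp (x * Real.cos θ)) /
    (∫ θ in (0:ℝ)..(2 * Real.pi), Real.exp (x * Real.cos θ))

/-- The potential `Φ(θ) = −2Kr₀·cos θ`. -/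
def Phi (K r₀ θ : ℝ) : ℝ := -2 * K * r₀ * Real.cos θ

/-- The weight `w(θ) = exp(−Φ(θ))/∫₀^{2π} exp(−Φ)`. -/
def w (K r₀ θ : ℝ) : ℝ :=
  Real.exp (-Phi K r₀ θ) / (∫ u in (0:ℝ)..(2 * Real.pi), Real.exp (-Phi K r₀ u))

/-- The Fokker–Planck operator `Ã₂v = (1/2)v'' + (Kr₀ sin(θ) v)'`. -/
def A2 (K r₀ : ℝ) (v : ℝ → ℝ) (θ : ℝ) : ℝ :=
  (1 / 2) * deriv (deriv v) θ + deriv (fun u => K * r₀ * Real.sin u * v u) θ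

/-- The `2π`-periodic primitive of a zero-mean `a`, normalized so that
`∫₀^{2π} 𝒜/k = 0` for the weight `k`. -/
def prim (k a : ℝ → ℝ) (θ : ℝ) : ℝ :=
  (∫ u in (0:ℝ)..θ, a u) -
    (∫ s in (0:ℝ)..(2 * Real.pi), (∫ u in (0:ℝ)..s, a u) / k s) /
      (∫ s in (0:ℝ)..(2 * Real.pi), 1 / k s)

/-- `v₀ = v − (∫₀^{2π} v)·w`, the zero-mean part of `v`. -/
def vz (K r₀ : ℝ) (v : ℝ → ℝ) (θ : ℝ) : ℝ :=
  v θ - (∫ u in (0:ℝ)..(2 * Real.pi), v u) * w K r₀ θ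

/-- The weighted Sobolev inner product `⟨u, v⟩_{−1,w}`. -/
def pairW (K r₀ : ℝ) (u v : ℝ → ℝ) : ℝ :=
  (∫ θ in (0:ℝ)..(2 * Real.pi), u θ) * (∫ θ in (0:ℝ)..(2 * Real.pi), v θ) +
    ∫ θ in (0:ℝ)..(2 * Real.pi),
      prim (w K r₀) (vz K r₀ u) θ * prim (w K r₀) (vz K r₀ v) θ / w K r₀ θ

/-!
The operator is in divergence form with respect to the Gibbs weight: `Ã₂v = J'` for the flux
`J = (1/2)v' + Kr₀ sin(θ) v = (w/2)·(v₀/w)'`. Hence the normalized primitive of `Ã₂v` is `J` up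
to a constant, and one periodic integration by parts against `𝒱₀` gives
`−⟨Ã₂v, v⟩_{−1,w} = (1/2)∫ v₀²/w`, while `‖v₀‖²_{−1,w} = ∫ 𝒱₀²/w`. The two are compared by a
weighted Poincaré inequality: Wirtinger's inequality for `𝒱₀` minus its mean (proved with
Parseval's identity), the bounds `e^{−2Kr₀}/Z ≤ w ≤ e^{2Kr₀}/Z` with `Z = ∫₀^{2π} e^{−Φ}`, and
the fact that subtracting a constant from `𝒱₀` cannot decrease `∫ 𝒱₀²/w` since `∫ 𝒱₀/w = 0`.
-/

open Set Real

theorem memLp_two_ofReal_of_continuousOn {a b : ℝ} {g : ℝ → ℝ} (hg : ContinuousOn g (Icc a b)) :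
    MemLp (fun x => (g x : ℂ)) 2 (volume.restrict (Ioc a b)) := by
  have hgc : ContinuousOn (fun x => (g x : ℂ)) (Icc a b) := by fun_prop
  exact ((memLp_two_iff_integrable_sq_norm (hgc.aestronglyMeasurable measurableSet_Icc)).mpr
    (hgc.norm.pow 2).integrableOn_Icc).mono_measure
    (Measure.restrict_mono Ioc_subset_Icc_self le_rfl)

theorem wirtinger_inequality {a b : ℝ} (hab : a < b) {f f' : ℝ → ℝ}
    (hf : ∀ x ∈ Icc a b, HasDerivAt f (f' x) x) (hf' : ContinuousOn f' (Icc a b))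
    (hfab : f b = f a) (hmean : ∫ x in a..b, f x = 0) :
    ∫ x in a..b, f x ^ 2 ≤ ((b - a) / (2 * π)) ^ 2 * ∫ x in a..b, f' x ^ 2 := by
  have hfc : ContinuousOn f (Icc a b) := fun x hx => (hf x hx).continuousAt.continuousWithinAt
  have coeff_le (n : ℤ) : ‖fourierCoeffOn hab (fun x => (f x : ℂ)) n‖ ^ 2 ≤
      ((b - a) / (2 * π)) ^ 2 * ‖fourierCoeffOn hab (fun x => (f' x : ℂ)) n‖ ^ 2 := by
    rcases eq_or_ne n 0 with rfl | hn
    · have h0 : fourierCoeffOn hab (fun x => (f x : ℂ)) 0 = 0 := by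
        simp [fourierCoeffOn_eq_integral, intervalIntegral.integral_ofReal, hmean]
      rw [h0, norm_zero, zero_pow two_ne_zero]
      positivity
    have hrel := fourierCoeffOn_of_hasDerivAt hab hn
      (fun x hx => (hf x (uIcc_of_le hab.le ▸ hx)).ofReal_comp)
      (Complex.continuous_ofReal.comp_continuousOn
        (hf'.mono (uIcc_of_le hab.le).subset)).intervalIntegrable
    rw [hfab, sub_self, mul_zero, zero_sub, ← Complex.ofReal_sub] at hrel
    have hnorm : ‖fourierCoeffOn hab (fun x => (f x : ℂ)) n‖ =
        (b - a) / (2 * π) * ‖fourierCoeffOn hab (fun x => (f' x : ℂ)) n‖ / |(n : ℝ)| := by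
      rw [hrel]
      simp only [one_div, norm_mul, norm_neg, norm_inv, Complex.norm_real, Complex.norm_I,
        Complex.norm_intCast, Real.norm_eq_abs, abs_of_pos (sub_pos.2 hab), abs_of_pos pi_pos,
        Complex.norm_ofNat]
      field_simp
    have hn1 : (1:ℝ) ≤ |(n:ℝ)| ^ 2 := one_le_pow₀ (by exact_mod_cast Int.one_le_abs hn)
    rw [hnorm, div_pow, mul_pow]
    exact div_le_self (by positivity) hn1
  have hle := hasSum_le coeff_le
    (hasSum_sq_fourierCoeffOn hab (memLp_two_ofReal_of_continuousOn hfc))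
    ((hasSum_sq_fourierCoeffOn hab (memLp_two_ofReal_of_continuousOn hf')).mul_left _)
  simp only [Complex.norm_real, Real.norm_eq_abs, sq_abs, smul_eq_mul, mul_left_comm _ (b - a)⁻¹]
    at hle
  exact le_of_mul_le_mul_left hle (inv_pos.2 (sub_pos.2 hab))

theorem integral_sq_div_le_integral_sub_sq_div {a b : ℝ} (hab : a ≤ b) {V k : ℝ → ℝ}
    (hV : ContinuousOn V (Icc a b)) (hk : ContinuousOn k (Icc a b))
    (hk0 : ∀ x ∈ Icc a b, 0 < k x) (hmean : ∫ x in a..b, V x / k x = 0) (μ : ℝ) :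
    ∫ x in a..b, V x ^ 2 / k x ≤ ∫ x in a..b, (V x - μ) ^ 2 / k x := by
  have hk' : ∀ x ∈ Icc a b, k x ≠ 0 := fun x hx => (hk0 x hx).ne'
  have hint : ∀ g : ℝ → ℝ, ContinuousOn g (Icc a b) →
      IntervalIntegrable (fun x => g x / k x) volume a b :=
    fun _ hg => (hg.div hk hk').intervalIntegrable_of_Icc hab
  have hexpand : ∫ x in a..b, (V x - μ) ^ 2 / k x =
      ∫ x in a..b, (V x ^ 2 / k x + (μ ^ 2 * (1 / k x) - 2 * μ * (V x / k x))) :=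
    intervalIntegral.integral_congr fun x _ => by ring
  have hinv : 0 ≤ ∫ x in a..b, 1 / k x :=
    intervalIntegral.integral_nonneg hab fun x hx => (one_div_pos.2 (hk0 x hx)).le
  have h1 := hint (fun _ => 1) continuousOn_const
  have hV' := hint V hV
  rw [hexpand, intervalIntegral.integral_add (hint (fun x => V x ^ 2) (hV.pow 2))
      ((h1.const_mul _).sub (hV'.const_mul _)),
    intervalIntegral.integral_sub (h1.const_mul _) (hV'.const_mul _),
    intervalIntegral.integral_const_mul, intervalIntegral.integral_const_mul, hmean]
  nlinarith [mul_nonneg (sq_nonneg μ) hinv]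

theorem weighted_wirtinger_inequality {a b : ℝ} (hab : a < b) {V v k : ℝ → ℝ} {m M : ℝ}
    (hm : 0 < m) (hkm : ∀ x ∈ Icc a b, m ≤ k x) (hkM : ∀ x ∈ Icc a b, k x ≤ M)
    (hV : ∀ x ∈ Icc a b, HasDerivAt V (v x) x) (hv : ContinuousOn v (Icc a b))
    (hk : ContinuousOn k (Icc a b)) (hVab : V b = V a) (hmean : ∫ x in a..b, V x / k x = 0) :
    ∫ x in a..b, V x ^ 2 / k x ≤
      ((b - a) / (2 * π)) ^ 2 * (M / m) * ∫ x in a..b, v x ^ 2 / k x := by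
  have hk0 : ∀ x ∈ Icc a b, 0 < k x := fun x hx => hm.trans_le (hkm x hx)
  have hk' : ∀ x ∈ Icc a b, k x ≠ 0 := fun x hx => (hk0 x hx).ne'
  have hVc : ContinuousOn V (Icc a b) := fun x hx => (hV x hx).continuousAt.continuousWithinAt
  set μ := (∫ x in a..b, V x) / (b - a)
  have hVμ : ContinuousOn (fun x => (V x - μ) ^ 2) (Icc a b) := (hVc.sub continuousOn_const).pow 2
  have hcentered : ∫ x in a..b, (V x - μ) = 0 := by
    rw [intervalIntegral.integral_sub (hVc.intervalIntegrable_of_Icc hab.le)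
        intervalIntegrable_const, intervalIntegral.integral_const, smul_eq_mul,
      mul_div_cancel₀ _ (sub_pos.2 hab).ne', sub_self]
  have hwirt := wirtinger_inequality hab (fun x hx => (hV x hx).sub_const μ) hv
    (by rw [hVab]) hcentered
  calc ∫ x in a..b, V x ^ 2 / k x
      ≤ ∫ x in a..b, (V x - μ) ^ 2 / k x :=
        integral_sq_div_le_integral_sub_sq_div hab.le hVc hk hk0 hmean μ
    _ ≤ ∫ x in a..b, m⁻¹ * (V x - μ) ^ 2 := by
        refine intervalIntegral.integral_mono_on hab.le
          ((hVμ.div hk hk').intervalIntegrable_of_Icc hab.le)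
          ((hVμ.const_mul _).intervalIntegrable_of_Icc hab.le) fun x hx => ?_
        rw [inv_mul_eq_div]
        exact div_le_div_of_nonneg_left (sq_nonneg _) hm (hkm x hx)
    _ ≤ m⁻¹ * (((b - a) / (2 * π)) ^ 2 * ∫ x in a..b, v x ^ 2) := by
        rw [intervalIntegral.integral_const_mul]
        exact mul_le_mul_of_nonneg_left hwirt (inv_nonneg.2 hm.le)
    _ ≤ m⁻¹ * (((b - a) / (2 * π)) ^ 2 * ∫ x in a..b, M * (v x ^ 2 / k x)) := by
        gcongr
        refine intervalIntegral.integral_mono_on hab.le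
          ((hv.pow 2).intervalIntegrable_of_Icc hab.le)
          ((((hv.pow 2).div hk hk').const_mul _).intervalIntegrable_of_Icc hab.le) fun x hx => ?_
        rw [mul_div_assoc', le_div_iff₀ (hk0 x hx), mul_comm M]
        exact mul_le_mul_of_nonneg_left (hkM x hx) (sq_nonneg _)
    _ = ((b - a) / (2 * π)) ^ 2 * (M / m) * ∫ x in a..b, v x ^ 2 / k x := by
        rw [intervalIntegral.integral_const_mul]
        ring

theorem Function.Periodic.deriv {𝕜 F : Type*} [NontriviallyNormedField 𝕜] [NormedAddCommGroup F]
    [NormedSpace 𝕜 F] {f : 𝕜 → F} {T : 𝕜} (hf : Function.Periodic f T) :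
    Function.Periodic (deriv f) T := fun x => by
  rw [← deriv_comp_add_const, funext hf]

section Prim

variable {k a : ℝ → ℝ}

theorem hasDerivAt_prim (ha : Continuous a) (θ : ℝ) : HasDerivAt (prim k a) (a θ) θ :=
  (intervalIntegral.integral_hasDerivAt_right (ha.intervalIntegrable _ _)
    (ha.stronglyMeasurableAtFilter _ _) ha.continuousAt).sub_const _

theorem continuous_prim (ha : Continuous a) : Continuous (prim k a) :=
  continuous_iff_continuousAt.2 fun θ => (hasDerivAt_prim ha θ).continuousAt

theorem prim_two_pi (ha : ∫ u in (0:ℝ)..2 * π, a u = 0) : prim k a (2 * π) = prim k a 0 := by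
  simp only [prim, ha, intervalIntegral.integral_same]

theorem integral_prim_div (ha : Continuous a) (hk : Continuous k) (hk0 : ∀ x, 0 < k x) :
    ∫ θ in (0:ℝ)..2 * π, prim k a θ / k θ = 0 := by
  have hk' : ∀ x, k x ≠ 0 := fun x => (hk0 x).ne'
  have hinvk : Continuous fun θ => 1 / k θ := continuous_const.div hk hk'
  have hFk : Continuous fun θ => (∫ u in (0:ℝ)..θ, a u) / k θ :=
    (intervalIntegral.continuous_primitive (fun _ _ => ha.intervalIntegrable _ _) 0).div hk hk'
  have hinv : 0 < ∫ s in (0:ℝ)..2 * π, 1 / k s :=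
    intervalIntegral.intervalIntegral_pos_of_pos_on (hinvk.intervalIntegrable _ _)
      (fun x _ => one_div_pos.2 (hk0 x)) two_pi_pos
  have hexpand : ∫ θ in (0:ℝ)..2 * π, prim k a θ / k θ =
      ∫ θ in (0:ℝ)..2 * π, ((∫ u in (0:ℝ)..θ, a u) / k θ -
        (∫ s in (0:ℝ)..2 * π, (∫ u in (0:ℝ)..s, a u) / k s) /
          (∫ s in (0:ℝ)..2 * π, 1 / k s) * (1 / k θ)) :=
    intervalIntegral.integral_congr fun θ _ => by rw [prim]; ring
  rw [hexpand, intervalIntegral.integral_sub (hFk.intervalIntegrable _ _)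
      ((hinvk.const_mul _).intervalIntegrable _ _),
    intervalIntegral.integral_const_mul, div_mul_cancel₀ _ hinv.ne', sub_self]

theorem exists_prim_eq_sub {g : ℝ → ℝ} (hg : ∀ x, HasDerivAt g (a x) x) (ha : Continuous a) :
    ∃ C, ∀ θ, prim k a θ = g θ - C := by
  refine ⟨g 0 + (∫ s in (0:ℝ)..2 * π, (∫ u in (0:ℝ)..s, a u) / k s) /
    (∫ s in (0:ℝ)..2 * π, 1 / k s), fun θ => ?_⟩
  rw [prim, intervalIntegral.integral_eq_sub_of_hasDerivAt (fun x _ => hg x)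
    (ha.intervalIntegrable _ _)]
  ring

end Prim

section Weight

variable (K r₀ : ℝ)

theorem neg_Phi (θ : ℝ) : -Phi K r₀ θ = 2 * K * r₀ * cos θ := by
  rw [Phi]; ring

theorem integral_exp_neg_Phi_pos : 0 < ∫ u in (0:ℝ)..2 * π, exp (-Phi K r₀ u) :=
  intervalIntegral.intervalIntegral_pos_of_pos_on
    (Continuous.intervalIntegrable (by unfold Phi; fun_prop) _ _)
    (fun _ _ => exp_pos _) (by positivity)

theorem w_pos (θ : ℝ) : 0 < w K r₀ θ :=
  div_pos (exp_pos _) (integral_exp_neg_Phi_pos K r₀)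

theorem continuous_w : Continuous (w K r₀) := by
  unfold w Phi; fun_prop

theorem w_periodic : Function.Periodic (w K r₀) (2 * π) := fun θ => by
  simp only [w, Phi, cos_add_two_pi]

theorem hasDerivAt_w (θ : ℝ) :
    HasDerivAt (w K r₀) (-(2 * K * r₀ * sin θ) * w K r₀ θ) θ := by
  have h := (((hasDerivAt_cos θ).const_mul (2 * K * r₀)).exp).div_const
    (∫ u in (0:ℝ)..2 * π, exp (-Phi K r₀ u))
  simp only [← neg_Phi] at h
  refine HasDerivAt.congr_deriv (f := w K r₀) h ?_
  unfold w
  ring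

theorem integral_w : ∫ θ in (0:ℝ)..2 * π, w K r₀ θ = 1 := by
  simp only [w]
  rw [intervalIntegral.integral_div, div_self (integral_exp_neg_Phi_pos K r₀).ne']

variable {K r₀}

theorem exp_neg_div_le_w (h : 0 ≤ K * r₀) (θ : ℝ) :
    exp (-(2 * K * r₀)) / ∫ u in (0:ℝ)..2 * π, exp (-Phi K r₀ u) ≤ w K r₀ θ := by
  unfold w
  rw [neg_Phi]
  refine div_le_div_of_nonneg_right (exp_le_exp.2 ?_) (integral_exp_neg_Phi_pos K r₀).le
  nlinarith [neg_one_le_cos θ]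

theorem w_le_exp_div (h : 0 ≤ K * r₀) (θ : ℝ) :
    w K r₀ θ ≤ exp (2 * K * r₀) / ∫ u in (0:ℝ)..2 * π, exp (-Phi K r₀ u) := by
  unfold w
  rw [neg_Phi]
  refine div_le_div_of_nonneg_right (exp_le_exp.2 ?_) (integral_exp_neg_Phi_pos K r₀).le
  nlinarith [cos_le_one θ]

end Weight

section Projection

variable {K r₀ : ℝ} {u v : ℝ → ℝ}

theorem integral_vz (hv : IntervalIntegrable v volume 0 (2 * π)) :
    ∫ θ in (0:ℝ)..2 * π, vz K r₀ v θ = 0 := by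
  simp only [vz]
  rw [intervalIntegral.integral_sub hv (((continuous_w K r₀).intervalIntegrable _ _).const_mul _),
    intervalIntegral.integral_const_mul, integral_w, mul_one, sub_self]

theorem vz_of_integral_eq_zero (hv : ∫ θ in (0:ℝ)..2 * π, v θ = 0) : vz K r₀ v = v := by
  ext θ
  rw [vz, hv, zero_mul, sub_zero]

theorem pairW_of_integral_eq_zero (hu : ∫ θ in (0:ℝ)..2 * π, u θ = 0) :
    pairW K r₀ u v = ∫ θ in (0:ℝ)..2 * π,
      prim (w K r₀) (vz K r₀ u) θ * prim (w K r₀) (vz K r₀ v) θ / w K r₀ θ := by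
  rw [pairW, hu, zero_mul, zero_add]

theorem continuous_vz (hv : Continuous v) : Continuous (vz K r₀ v) :=
  hv.sub (continuous_const.mul (continuous_w K r₀))

theorem pairW_vz_self (hv : Continuous v) :
    pairW K r₀ (vz K r₀ v) (vz K r₀ v) =
      ∫ θ in (0:ℝ)..2 * π, prim (w K r₀) (vz K r₀ v) θ ^ 2 / w K r₀ θ := by
  have hmean := integral_vz (K := K) (r₀ := r₀) (hv.intervalIntegrable 0 (2 * π))
  rw [pairW_of_integral_eq_zero hmean, vz_of_integral_eq_zero hmean]
  simp only [sq]

theorem vz_periodic (hper : Function.Periodic v (2 * π)) :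
    Function.Periodic (vz K r₀ v) (2 * π) := fun θ => by
  simp only [vz, hper θ, w_periodic K r₀ θ]

end Projection

def fpFlux (K r₀ : ℝ) (v : ℝ → ℝ) (θ : ℝ) : ℝ :=
  (1 / 2) * deriv v θ + K * r₀ * sin θ * v θ

section FokkerPlanck

variable {K r₀ : ℝ} {v : ℝ → ℝ}

theorem hasDerivAt_fpFlux (hv : ContDiff ℝ 2 v) (θ : ℝ) :
    HasDerivAt (fpFlux K r₀ v) (A2 K r₀ v θ) θ := by
  have hv' := (contDiff_succ_iff_deriv (n := 1)).1 hv
  have hdv : Differentiable ℝ (deriv v) := hv'.2.2.differentiable one_ne_zero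
  have hsin : HasDerivAt (fun u => K * r₀ * sin u * v u) _ θ :=
    ((hasDerivAt_sin θ).const_mul (K * r₀)).mul (hv'.1 θ).hasDerivAt
  rw [A2, hsin.deriv]
  exact ((hdv θ).hasDerivAt.const_mul (1 / 2)).add hsin

theorem continuous_fpFlux (hv : ContDiff ℝ 2 v) : Continuous (fpFlux K r₀ v) :=
  continuous_iff_continuousAt.2 fun θ => (hasDerivAt_fpFlux hv θ).continuousAt

theorem continuous_A2 (hv : ContDiff ℝ 2 v) : Continuous (A2 K r₀ v) := by
  have hdv : ContDiff ℝ 1 (deriv v) := ((contDiff_succ_iff_deriv (n := 1)).1 hv).2.2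
  have hflux : ContDiff ℝ 1 (fpFlux K r₀ v) := by
    unfold fpFlux
    have := hv.of_le one_le_two
    fun_prop
  rw [show A2 K r₀ v = deriv (fpFlux K r₀ v) from
    funext fun θ => (hasDerivAt_fpFlux hv θ).deriv.symm]
  exact hflux.continuous_deriv le_rfl

theorem fpFlux_periodic (hper : Function.Periodic v (2 * π)) :
    Function.Periodic (fpFlux K r₀ v) (2 * π) := fun θ => by
  simp only [fpFlux, hper θ, hper.deriv θ, sin_add_two_pi]

theorem integral_A2 (hv : ContDiff ℝ 2 v) (hper : Function.Periodic v (2 * π)) :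
    ∫ θ in (0:ℝ)..2 * π, A2 K r₀ v θ = 0 := by
  rw [intervalIntegral.integral_eq_sub_of_hasDerivAt (fun θ _ => hasDerivAt_fpFlux hv θ)
    ((continuous_A2 hv).intervalIntegrable _ _), sub_eq_zero, ← zero_add (2 * π),
    fpFlux_periodic hper]

theorem hasDerivAt_vz_div_w (hv : Differentiable ℝ v) (θ : ℝ) :
    HasDerivAt (fun θ => vz K r₀ v θ / w K r₀ θ) (2 * fpFlux K r₀ v θ / w K r₀ θ) θ := by
  have hw := (w_pos K r₀ θ).ne'
  have h := (((hv θ).hasDerivAt.div (hasDerivAt_w K r₀ θ) hw).sub_const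
    (∫ u in (0:ℝ)..2 * π, v u))
  refine (h.congr_deriv ?_).congr_of_eventuallyEq (Filter.Eventually.of_forall fun x => ?_)
  · rw [fpFlux]
    field_simp
    ring
  · have := (w_pos K r₀ x).ne'
    simp only [vz, Pi.div_apply]
    field_simp

theorem integral_fpFlux_div_w_mul_prim (hv : ContDiff ℝ 2 v)
    (hper : Function.Periodic v (2 * π)) :
    ∫ θ in (0:ℝ)..2 * π, 2 * fpFlux K r₀ v θ / w K r₀ θ * prim (w K r₀) (vz K r₀ v) θ =
      -∫ θ in (0:ℝ)..2 * π, vz K r₀ v θ ^ 2 / w K r₀ θ := by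
  have hv₀ := continuous_vz (K := K) (r₀ := r₀) hv.continuous
  have hflux : Continuous fun θ => 2 * fpFlux K r₀ v θ / w K r₀ θ :=
    (continuous_const.mul (continuous_fpFlux hv)).div (continuous_w K r₀)
      fun θ => (w_pos K r₀ θ).ne'
  have hibp := intervalIntegral.integral_mul_deriv_eq_deriv_mul (a := 0) (b := 2 * π)
    (fun θ _ => hasDerivAt_vz_div_w (hv.differentiable two_ne_zero) θ)
    (fun θ _ => hasDerivAt_prim (k := w K r₀) hv₀ θ)
    (hflux.intervalIntegrable _ _) (hv₀.intervalIntegrable _ _)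
  rw [prim_two_pi (integral_vz (hv.continuous.intervalIntegrable _ _)), ← zero_add (2 * π),
    vz_periodic hper, w_periodic, zero_add, sub_self, zero_sub] at hibp
  have hsq : ∫ θ in (0:ℝ)..2 * π, vz K r₀ v θ / w K r₀ θ * vz K r₀ v θ =
      ∫ θ in (0:ℝ)..2 * π, vz K r₀ v θ ^ 2 / w K r₀ θ :=
    intervalIntegral.integral_congr fun θ _ => by ring
  linarith

theorem pairW_A2 (hv : ContDiff ℝ 2 v) (hper : Function.Periodic v (2 * π)) :
    pairW K r₀ (A2 K r₀ v) v =
      -(1 / 2) * ∫ θ in (0:ℝ)..2 * π, vz K r₀ v θ ^ 2 / w K r₀ θ := by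
  have hw0 : ∀ θ, w K r₀ θ ≠ 0 := fun θ => (w_pos K r₀ θ).ne'
  have hv₀ := continuous_vz (K := K) (r₀ := r₀) hv.continuous
  set V := prim (w K r₀) (vz K r₀ v)
  have hV : Continuous V := continuous_prim hv₀
  obtain ⟨C, hC⟩ := exists_prim_eq_sub (k := w K r₀)
    (hasDerivAt_fpFlux (K := K) (r₀ := r₀) hv) (continuous_A2 hv)
  have hsplit : ∀ θ, prim (w K r₀) (A2 K r₀ v) θ * V θ / w K r₀ θ =
      1 / 2 * (2 * fpFlux K r₀ v θ / w K r₀ θ * V θ) - C * (V θ / w K r₀ θ) := fun θ => by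
    rw [hC]; field_simp
  have hfV : IntervalIntegrable (fun θ => 2 * fpFlux K r₀ v θ / w K r₀ θ * V θ)
      volume 0 (2 * π) :=
    ((((continuous_const.mul (continuous_fpFlux hv)).div (continuous_w K r₀) hw0).mul
      hV).intervalIntegrable _ _)
  have hVw : IntervalIntegrable (fun θ => V θ / w K r₀ θ) volume 0 (2 * π) :=
    (hV.div (continuous_w K r₀) hw0).intervalIntegrable _ _
  rw [pairW_of_integral_eq_zero (integral_A2 hv hper),
    vz_of_integral_eq_zero (integral_A2 hv hper),
    intervalIntegral.integral_congr fun θ _ => hsplit θ,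
    intervalIntegral.integral_sub (hfV.const_mul _) (hVw.const_mul _),
    intervalIntegral.integral_const_mul, intervalIntegral.integral_const_mul,
    integral_fpFlux_div_w_mul_prim hv hper,
    integral_prim_div hv₀ (continuous_w K r₀) (w_pos K r₀)]
  ring

end FokkerPlanck

theorem stmt12_general (K r₀ : ℝ) (hK : 1 < K) (hr₀ : 0 < r₀)
    (v : ℝ → ℝ) (hv : ContDiff ℝ 2 v) (hper : Function.Periodic v (2 * Real.pi)) :
    (Real.exp (-(4 * K * r₀)) / 2) * pairW K r₀ (vz K r₀ v) (vz K r₀ v) ≤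
      -pairW K r₀ (fun θ => A2 K r₀ v θ) v := by
  have hKr : 0 ≤ K * r₀ := (mul_pos (by linarith) hr₀).le
  have hZ := integral_exp_neg_Phi_pos K r₀
  have hv₀ := continuous_vz (K := K) (r₀ := r₀) hv.continuous
  have hpoincare := weighted_wirtinger_inequality two_pi_pos (div_pos (exp_pos _) hZ)
    (fun θ _ => exp_neg_div_le_w hKr θ) (fun θ _ => w_le_exp_div hKr θ)
    (fun θ _ => hasDerivAt_prim hv₀ θ) hv₀.continuousOn (continuous_w K r₀).continuousOn
    (prim_two_pi (integral_vz (hv.continuous.intervalIntegrable _ _)))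
    (integral_prim_div hv₀ (continuous_w K r₀) (w_pos K r₀))
  have hconst : ((2 * π - 0) / (2 * π)) ^ 2 *
      (exp (2 * K * r₀) / (∫ u in (0:ℝ)..2 * π, exp (-Phi K r₀ u)) /
        (exp (-(2 * K * r₀)) / ∫ u in (0:ℝ)..2 * π, exp (-Phi K r₀ u))) = exp (4 * K * r₀) := by
    rw [sub_zero, div_self two_pi_pos.ne', one_pow, one_mul, div_div_div_cancel_right₀ hZ.ne',
      ← exp_sub]
    ring_nf
  rw [hconst] at hpoincare
  have hscaled := mul_le_mul_of_nonneg_left hpoincare (exp_pos (-(4 * K * r₀))).le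
  rw [← mul_assoc, ← exp_add, neg_add_cancel, exp_zero, one_mul] at hscaled
  rw [pairW_vz_self hv.continuous, pairW_A2 hv hper]
  linarith

/-- Spectral gap estimate for the Fokker–Planck operator in the weighted Sobolev norm. -/
theorem stmt12 (K r₀ : ℝ) (hK : 1 < K) (hr₀ : 0 < r₀) (hfix : r₀ = Psi0 (2 * K * r₀))
    (v : ℝ → ℝ) (hv : ContDiff ℝ 2 v) (hper : Function.Periodic v (2 * Real.pi)) :
    (Real.exp (-(4 * K * r₀)) / 2) * pairW K r₀ (vz K r₀ v) (vz K r₀ v) ≤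
      -pairW K r₀ (fun θ => A2 K r₀ v θ) v :=
  stmt12_general K r₀ hK hr₀ v hv hper
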